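/- arXiv:2204.07247 — 2 statements merged into one kernel-verified Lean document; each statement's English description precedes it below -/
import Mathlib

section
/- Fix K ∈ ℕ with K ≥ 1, N = 2K+1, L > 0, ε ∈ ℝ, M > 0, a > 0, b, c ∈ ℝ, and let u¹, u⁰, v be real-valued grid functions satisfying the mass constraint a·∑_s v(s) + b·∑_s u¹(s) + c·∑_s u⁰(s) = 0. Define G_N(z) = (1/(2Ma))·‖a·z + b·u¹ + c·u⁰‖₋₁,N² + E_N(z) for real-valued grid functions z, and μ_N(v) = v³ + (1−ε)v + 2Δ_N v + Δ_N² v. Then the following are equivalent: (i) v solves the fully discrete BDF2–PFC equation a·v + b·u¹ + c·u⁰ = M·Δ_N(μ_N(v)) (equality of grid functions); (ii) v is a critical point of G_N along mass-conserving directions, i.e., for every real-valued grid function w with zero mean, the function s ↦ G_N(v + s·w) has derivative 0 at s = 0. -/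
open Complex

noncomputable section

/-- A grid function on the `N × N` grid with `N = 2K+1`. -/
abbrev GridFn (K : ℕ) := Fin (2 * K + 1) × Fin (2 * K + 1) → ℂ

/-- A grid function is real-valued if all its values are real. -/
def RealValued {K : ℕ} (w : GridFn K) : Prop := ∀ m, (w m).im = 0

/-- A grid function has zero (discrete) mean if its values sum to zero. -/
def ZeroMean {K : ℕ} (w : GridFn K) : Prop := (∑ s, w s) = 0

/-- The discrete Fourier coefficient `ĉ_w(r) = N⁻² ∑_s w(s) exp(−2πi(r₁s₁+r₂s₂)/N)`. -/
def dft (K : ℕ) (w : GridFn K) (r : ℤ × ℤ) : ℂ :=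
  ((2 * K + 1 : ℂ) ^ 2)⁻¹ *
    ∑ s : Fin (2 * K + 1) × Fin (2 * K + 1),
      w s * Complex.exp (-(2 * Real.pi * Complex.I) *
        ((r.1 : ℂ) * ((s.1 : ℕ) : ℂ) + (r.2 : ℂ) * ((s.2 : ℕ) : ℂ)) / (2 * K + 1))

/-- The set of nonzero frequencies `{r ∈ ℤ² : −K ≤ r₁,r₂ ≤ K} \ {0}`. -/
def freqs (K : ℕ) : Finset (ℤ × ℤ) :=
  (Finset.Icc (-(K : ℤ)) K ×ˢ Finset.Icc (-(K : ℤ)) K).erase (0, 0)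

/-- The spectral operator `(−Δ_N)^α` for `α ∈ {−1, 1, 2}` (defined for any `α : ℤ`):
`((−Δ_N)^α w)(m) = ∑_{r ≠ 0} (4π²|r|²/L²)^α ĉ_w(r) exp(2πi r·m/N)`. -/
def specOp (K : ℕ) (L : ℝ) (α : ℤ) (w : GridFn K) : GridFn K := fun m =>
  ∑ r ∈ freqs K,
    (((4 * Real.pi ^ 2 * ((r.1 : ℝ) ^ 2 + (r.2 : ℝ) ^ 2) / L ^ 2 : ℝ) : ℂ)) ^ α *
      dft K w r *
      Complex.exp ((2 * Real.pi * Complex.I) *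
        ((r.1 : ℂ) * ((m.1 : ℕ) : ℂ) + (r.2 : ℂ) * ((m.2 : ℕ) : ℂ)) / (2 * K + 1))

/-- The discrete Laplacian `Δ_N w = −((−Δ_N)¹ w)`. -/
def lapN (K : ℕ) (L : ℝ) (w : GridFn K) : GridFn K := fun m => -(specOp K L 1 w m)

/-- The discrete biharmonic operator `Δ_N² w = (−Δ_N)² w`. -/
def bilapN (K : ℕ) (L : ℝ) (w : GridFn K) : GridFn K := specOp K L 2 w

/-- The discrete inverse (negative) Laplacian `(−Δ_N)⁻¹`. -/
def invNegLapN (K : ℕ) (L : ℝ) (w : GridFn K) : GridFn K := specOp K L (-1) w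

/-- The discrete inner product `(u,v)_N = h² ∑_s u(s) conj(v(s))` with `h = L/N`. -/
def ipN (K : ℕ) (L : ℝ) (u v : GridFn K) : ℂ :=
  (((L / (2 * K + 1)) ^ 2 : ℝ) : ℂ) * ∑ s, u s * (starRingEnd ℂ) (v s)

/-- The spectral partial derivative `D₁` (in the first coordinate direction). -/
def D1 (K : ℕ) (L : ℝ) (w : GridFn K) : GridFn K := fun m =>
  ∑ r ∈ Finset.Icc (-(K : ℤ)) K ×ˢ Finset.Icc (-(K : ℤ)) K,
    (2 * Real.pi * Complex.I * (r.1 : ℂ) / (L : ℂ)) * dft K w r *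
      Complex.exp ((2 * Real.pi * Complex.I) *
        ((r.1 : ℂ) * ((m.1 : ℕ) : ℂ) + (r.2 : ℂ) * ((m.2 : ℕ) : ℂ)) / (2 * K + 1))

/-- The spectral partial derivative `D₂` (in the second coordinate direction). -/
def D2 (K : ℕ) (L : ℝ) (w : GridFn K) : GridFn K := fun m =>
  ∑ r ∈ Finset.Icc (-(K : ℤ)) K ×ˢ Finset.Icc (-(K : ℤ)) K,
    (2 * Real.pi * Complex.I * (r.2 : ℂ) / (L : ℂ)) * dft K w r *
      Complex.exp ((2 * Real.pi * Complex.I) *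
        ((r.1 : ℂ) * ((m.1 : ℕ) : ℂ) + (r.2 : ℂ) * ((m.2 : ℕ) : ℂ)) / (2 * K + 1))

/-- The discrete squared gradient `|∇_N w|²(m) = |(D₁w)(m)|² + |(D₂w)(m)|²`. -/
def gradSqN (K : ℕ) (L : ℝ) (w : GridFn K) (m : Fin (2 * K + 1) × Fin (2 * K + 1)) : ℝ :=
  ‖D1 K L w m‖ ^ 2 + ‖D2 K L w m‖ ^ 2

/-- The discrete PFC energy
`E_N(z) = h² ∑_m [¼z(m)⁴ + ((1−ε)/2)z(m)² − |∇_N z|²(m) + ½|(Δ_N z)(m)|²]`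
of a real-valued grid function `z`. -/
def EN (K : ℕ) (L ε : ℝ) (z : GridFn K) : ℝ :=
  (L / (2 * K + 1)) ^ 2 *
    ∑ m, ((1/4) * (z m).re ^ 4 + ((1 - ε) / 2) * (z m).re ^ 2
      - gradSqN K L z m + (1/2) * ‖lapN K L z m‖ ^ 2)

/-- The squared discrete negative norm `‖w‖₋₁,N² = Re((−Δ_N)⁻¹w, w)_N`. -/
def negNormSq (K : ℕ) (L : ℝ) (w : GridFn K) : ℝ :=
  (ipN K L (invNegLapN K L w) w).re

/-- The discrete PFC chemical potential `μ_N(v) = v³ + (1−ε)v + 2Δ_N v + Δ_N² v`. -/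
def muN (K : ℕ) (L ε : ℝ) (v : GridFn K) : GridFn K := fun m =>
  (v m) ^ 3 + ((1 - ε : ℝ) : ℂ) * v m + 2 * lapN K L v m + bilapN K L v m

/-- The objective `G_N(z) = (1/(2Ma))‖a z + b u¹ + c u⁰‖₋₁,N² + E_N(z)`. -/
def GN (K : ℕ) (L ε M a b c : ℝ) (u1 u0 : GridFn K) (z : GridFn K) : ℝ :=
  (1 / (2 * M * a)) *
    negNormSq K L (fun m => (a : ℂ) * z m + (b : ℂ) * u1 m + (c : ℂ) * u0 m)
    + EN K L ε z

/-!
In the basis of Fourier modes `e_r(m) = exp(2πi r·m/N)`, which are the characters of `(ℤ/N)²`,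
every spectral operator is diagonal. Hence `(−Δ_N)^α (−Δ_N)^(−α)` removes the mean, and the
summation-by-parts identities `(D₁u, D₁w)_N + (D₂u, D₂w)_N = ((−Δ_N)u, w)_N`,
`(Δ_N u, Δ_N w)_N = (Δ_N² u, w)_N` hold, as well as the symmetry of `(−Δ_N)⁻¹`. Consequently the
derivative of `s ↦ G_N(v + s w)` at `0` is `Re (g, w)_N` with
`g = M⁻¹(−Δ_N)⁻¹(a v + b u¹ + c u⁰) + μ_N(v)`. For real `g` this vanishes for all real mean-zero
`w` iff `g` is constant (test with `w = g − mean g`). Since `a v + b u¹ + c u⁰` has mean zero by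
the mass constraint, applying `−Δ_N` shows that `g` is constant iff the BDF2–PFC equation holds.
-/

open Finset

section Pairing

variable {n : ℕ} [NeZero n]

def zmodPairing (x y : ZMod n × ZMod n) : ℂ := ZMod.stdAddChar (x.1 * y.1 + x.2 * y.2)

lemma zmodPairing_comm (x y : ZMod n × ZMod n) : zmodPairing x y = zmodPairing y x := by
  simp only [zmodPairing, mul_comm]

lemma zmodPairing_neg_left (x y : ZMod n × ZMod n) :
    zmodPairing (-x) y = starRingEnd ℂ (zmodPairing x y) := by
  simp only [zmodPairing, ← AddChar.map_neg_eq_conj, Prod.fst_neg, Prod.snd_neg]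
  ring_nf

lemma zmodPairing_sub_left (x x' y : ZMod n × ZMod n) :
    zmodPairing (x - x') y = zmodPairing x y * starRingEnd ℂ (zmodPairing x' y) := by
  simp only [zmodPairing, ← AddChar.map_neg_eq_conj, ← AddChar.map_add_eq_mul, Prod.fst_sub,
    Prod.snd_sub]
  ring_nf

lemma zmodPairing_sub_right (x y y' : ZMod n × ZMod n) :
    zmodPairing x (y - y') = zmodPairing x y * starRingEnd ℂ (zmodPairing x y') := by
  simp only [zmodPairing_comm x, zmodPairing_sub_left]

lemma sum_zmodPairing_left (y : ZMod n × ZMod n) :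
    ∑ x, zmodPairing x y = if y = 0 then (n : ℂ) ^ 2 else 0 := by
  have hψ := ZMod.isPrimitive_stdAddChar n
  simp only [zmodPairing, AddChar.map_add_eq_mul, Fintype.sum_prod_type, ← sum_mul_sum,
    AddChar.sum_mulShift _ hψ, ZMod.card, Prod.ext_iff, Prod.fst_zero, Prod.snd_zero]
  split_ifs <;> simp_all [sq]

lemma sum_zmodPairing_right (x : ZMod n × ZMod n) :
    ∑ y, zmodPairing x y = if x = 0 then (n : ℂ) ^ 2 else 0 := by
  simp only [zmodPairing_comm x, sum_zmodPairing_left]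

lemma sum_fin_natCast_eq_sum_zmod {M : Type*} [AddCommMonoid M] (f : ZMod n → M) :
    ∑ j : Fin n, f (j : ℕ) = ∑ x, f x := by
  have hinj : Function.Injective (fun j : Fin n => ((j : ℕ) : ZMod n)) := fun i j h => by
    simpa [ZMod.natCast_eq_natCast_iff', Nat.mod_eq_of_lt, Fin.ext_iff] using h
  exact Fintype.sum_bijective _ ((Fintype.bijective_iff_injective_and_card _).2
    ⟨hinj, by simp⟩) _ _ fun _ => rfl

end Pairing

section FourierModes

variable {K : ℕ} {M : Type*} [AddCommMonoid M]

lemma intCast_injOn_Icc (K : ℕ) :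
    Set.InjOn (fun r : ℤ => (r : ZMod (2 * K + 1))) (Icc (-(K : ℤ)) K) := by
  intro r hr r' hr' h
  simp only [coe_Icc, Set.mem_Icc] at hr hr'
  have hdvd := (ZMod.intCast_eq_intCast_iff_dvd_sub r r' _).1 h
  have := Int.eq_zero_of_dvd_of_natAbs_lt_natAbs hdvd (by omega)
  omega

lemma sum_Icc_intCast_eq_sum_zmod (f : ZMod (2 * K + 1) → M) :
    ∑ r ∈ Icc (-(K : ℤ)) K, f r = ∑ x, f x := by
  rw [← sum_image (intCast_injOn_Icc K)]
  congr
  apply eq_univ_of_card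
  rw [card_image_of_injOn (intCast_injOn_Icc K), Int.card_Icc, ZMod.card]
  omega

def freqBox (K : ℕ) : Finset (ℤ × ℤ) := Icc (-(K : ℤ)) K ×ˢ Icc (-(K : ℤ)) K

lemma freqs_eq_erase (K : ℕ) : freqs K = (freqBox K).erase (0, 0) := rfl

lemma freqs_subset_freqBox (K : ℕ) : freqs K ⊆ freqBox K := erase_subset _ _

lemma neg_mem_freqs {r : ℤ × ℤ} (hr : r ∈ freqs K) : -r ∈ freqs K := by
  simp only [freqs, mem_erase, mem_product, mem_Icc, ne_eq, Prod.ext_iff, Prod.fst_neg,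
    Prod.snd_neg] at hr ⊢
  omega

def gridPoint (m : Fin (2 * K + 1) × Fin (2 * K + 1)) : ZMod (2 * K + 1) × ZMod (2 * K + 1) :=
  ((m.1 : ℕ), (m.2 : ℕ))

def freqClass (K : ℕ) (r : ℤ × ℤ) : ZMod (2 * K + 1) × ZMod (2 * K + 1) := (r.1, r.2)

lemma gridPoint_injective : Function.Injective (gridPoint (K := K)) := by
  intro m s h
  simp only [gridPoint, Prod.ext_iff, ZMod.natCast_eq_natCast_iff', Nat.mod_eq_of_lt,
    Fin.is_lt] at h
  exact Prod.ext (Fin.ext h.1) (Fin.ext h.2)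

lemma freqClass_injOn (K : ℕ) : Set.InjOn (freqClass K) (freqBox K) := by
  intro r hr r' hr' h
  simp only [freqBox, coe_product, Set.mem_prod] at hr hr'
  simp only [freqClass, Prod.ext_iff] at h
  exact Prod.ext (intCast_injOn_Icc K hr.1 hr'.1 h.1) (intCast_injOn_Icc K hr.2 hr'.2 h.2)

lemma sum_gridPoint_eq_sum_zmod (f : ZMod (2 * K + 1) × ZMod (2 * K + 1) → M) :
    ∑ m, f (gridPoint m) = ∑ x, f x := by
  simp only [Fintype.sum_prod_type, gridPoint]
  rw [sum_fin_natCast_eq_sum_zmod (fun x => ∑ j : Fin (2 * K + 1), f (x, (j : ℕ)))]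
  exact sum_congr rfl fun x _ => sum_fin_natCast_eq_sum_zmod (fun y => f (x, y))

lemma sum_freqBox_eq_sum_zmod (f : ZMod (2 * K + 1) × ZMod (2 * K + 1) → M) :
    ∑ r ∈ freqBox K, f (freqClass K r) = ∑ x, f x := by
  simp only [freqBox, sum_product, Fintype.sum_prod_type, freqClass]
  rw [sum_Icc_intCast_eq_sum_zmod (fun x => ∑ j ∈ Icc (-(K : ℤ)) K, f (x, (j : ZMod _)))]
  exact sum_congr rfl fun x _ => sum_Icc_intCast_eq_sum_zmod (fun y => f (x, y))

/-- The mode `exp(2πi r·m/N)`, written as a character of `(ℤ/N)²` (see `exp_eq_fourierMode`) so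
that its orthogonality relations come from `AddChar.sum_mulShift`. -/
def fourierMode (K : ℕ) (r : ℤ × ℤ) (m : Fin (2 * K + 1) × Fin (2 * K + 1)) : ℂ :=
  zmodPairing (freqClass K r) (gridPoint m)

lemma exp_eq_fourierMode (r : ℤ × ℤ) (m : Fin (2 * K + 1) × Fin (2 * K + 1)) :
    exp ((2 * Real.pi * I) * ((r.1 : ℂ) * ((m.1 : ℕ) : ℂ) + (r.2 : ℂ) * ((m.2 : ℕ) : ℂ))
      / (2 * K + 1)) = fourierMode K r m := by
  have h := ZMod.stdAddChar_coe (N := 2 * K + 1) (r.1 * (m.1 : ℕ) + r.2 * (m.2 : ℕ))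
  push_cast at h
  rw [← h]
  rfl

lemma exp_neg_eq_conj_fourierMode (r : ℤ × ℤ) (m : Fin (2 * K + 1) × Fin (2 * K + 1)) :
    exp (-(2 * Real.pi * I) * ((r.1 : ℂ) * ((m.1 : ℕ) : ℂ) + (r.2 : ℂ) * ((m.2 : ℕ) : ℂ))
      / (2 * K + 1)) = starRingEnd ℂ (fourierMode K r m) := by
  rw [← exp_eq_fourierMode, ← exp_conj]
  congr 1
  simp only [map_div₀, map_mul, map_add, map_ofNat, map_one, conj_ofReal, conj_I, map_intCast,
    map_natCast]
  ring

lemma fourierMode_zero (m : Fin (2 * K + 1) × Fin (2 * K + 1)) : fourierMode K (0, 0) m = 1 := by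
  simp [fourierMode, zmodPairing, freqClass]

lemma fourierMode_neg (r : ℤ × ℤ) (m : Fin (2 * K + 1) × Fin (2 * K + 1)) :
    fourierMode K (-r) m = starRingEnd ℂ (fourierMode K r m) := by
  rw [fourierMode, fourierMode, ← zmodPairing_neg_left]
  simp [freqClass]

theorem sum_fourierMode_mul_conj {r r' : ℤ × ℤ} (hr : r ∈ freqBox K) (hr' : r' ∈ freqBox K) :
    ∑ m, fourierMode K r m * starRingEnd ℂ (fourierMode K r' m)
      = if r = r' then (2 * K + 1 : ℂ) ^ 2 else 0 := by
  simp only [fourierMode, ← zmodPairing_sub_left]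
  rw [sum_gridPoint_eq_sum_zmod (zmodPairing _), sum_zmodPairing_right]
  simp only [sub_eq_zero, (freqClass_injOn K).eq_iff hr hr']
  push_cast
  rfl

theorem sum_freqBox_fourierMode_mul_conj (m s : Fin (2 * K + 1) × Fin (2 * K + 1)) :
    ∑ r ∈ freqBox K, fourierMode K r m * starRingEnd ℂ (fourierMode K r s)
      = if m = s then (2 * K + 1 : ℂ) ^ 2 else 0 := by
  simp only [fourierMode, ← zmodPairing_sub_right]
  rw [sum_freqBox_eq_sum_zmod (zmodPairing · _), sum_zmodPairing_left]
  simp only [sub_eq_zero, gridPoint_injective.eq_iff]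
  push_cast
  rfl

end FourierModes

section Multipliers

variable {K : ℕ}

lemma gridSize_ne_zero : (2 * K + 1 : ℂ) ≠ 0 := by
  exact_mod_cast Nat.succ_ne_zero (2 * K)

lemma conj_gridSize : starRingEnd ℂ (2 * K + 1 : ℂ) = 2 * K + 1 := by
  simp [map_add, map_mul, map_ofNat, map_one, map_natCast]

lemma dft_eq_sum_mul_conj (w : GridFn K) (r : ℤ × ℤ) :
    dft K w r = ((2 * K + 1 : ℂ) ^ 2)⁻¹ * ∑ s, w s * starRingEnd ℂ (fourierMode K r s) := by
  simp only [dft, exp_neg_eq_conj_fourierMode]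

lemma dft_zero (w : GridFn K) : dft K w (0, 0) = ((2 * K + 1 : ℂ) ^ 2)⁻¹ * ∑ s, w s := by
  simp [dft_eq_sum_mul_conj, fourierMode_zero]

lemma dft_add_smul (u w : GridFn K) (c : ℂ) (r : ℤ × ℤ) :
    dft K (fun m => u m + c * w m) r = dft K u r + c * dft K w r := by
  simp only [dft_eq_sum_mul_conj, add_mul, sum_add_distrib, mul_assoc, ← mul_sum]
  ring

lemma dft_smul (w : GridFn K) (c : ℂ) (r : ℤ × ℤ) :
    dft K (fun m => c * w m) r = c * dft K w r := by
  simp only [dft_eq_sum_mul_conj, mul_assoc, ← mul_sum]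
  ring

lemma conj_dft_of_realValued {u : GridFn K} (hu : RealValued u) (r : ℤ × ℤ) :
    starRingEnd ℂ (dft K u r) = dft K u (-r) := by
  simp only [dft_eq_sum_mul_conj, map_mul, map_inv₀, map_pow, conj_gridSize, map_sum,
    fourierMode_neg, Complex.conj_eq_iff_im.2 (hu _)]

lemma dft_const (c : ℂ) {r : ℤ × ℤ} (hr : r ∈ freqs K) : dft K (fun _ => c) r = 0 := by
  have hsum := sum_fourierMode_mul_conj (freqs_subset_freqBox K hr)
    (show ((0, 0) : ℤ × ℤ) ∈ freqBox K by simp [freqBox])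
  simp only [fourierMode_zero, map_one, mul_one, if_neg (mem_erase.1 hr).1] at hsum
  rw [dft_eq_sum_mul_conj, ← mul_sum, ← map_sum, hsum, map_zero, mul_zero, mul_zero]

def fourierMul (A : Finset (ℤ × ℤ)) (σ : ℤ × ℤ → ℂ) (u : GridFn K) : GridFn K :=
  fun m => ∑ r ∈ A, σ r * dft K u r * fourierMode K r m

variable {A : Finset (ℤ × ℤ)} {σ : ℤ × ℤ → ℂ}

lemma fourierMul_add_smul (u w : GridFn K) (c : ℂ) :
    fourierMul A σ (fun m => u m + c * w m)
      = fun m => fourierMul A σ u m + c * fourierMul A σ w m := by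
  funext m
  simp only [fourierMul, dft_add_smul, mul_sum, ← sum_add_distrib]
  exact sum_congr rfl fun _ _ => by ring

lemma fourierMul_smul (w : GridFn K) (c : ℂ) :
    fourierMul A σ (fun m => c * w m) = fun m => c * fourierMul A σ w m := by
  funext m
  simp only [fourierMul, dft_smul, mul_sum]
  exact sum_congr rfl fun _ _ => by ring

lemma fourierMul_freqBox_of_zero (hσ : σ (0, 0) = 0) :
    fourierMul (K := K) (freqBox K) σ = fourierMul (freqs K) σ := by
  funext u m
  rw [fourierMul, fourierMul, freqs_eq_erase, sum_erase _ (by simp [hσ])]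

theorem dft_fourierMul (hA : A ⊆ freqBox K) (u : GridFn K) {r : ℤ × ℤ} (hr : r ∈ A) :
    dft K (fourierMul A σ u) r = σ r * dft K u r := by
  have hsum : ∀ r' ∈ A, ∑ s, σ r' * dft K u r' * fourierMode K r' s
        * starRingEnd ℂ (fourierMode K r s)
      = if r' = r then (2 * K + 1 : ℂ) ^ 2 * (σ r * dft K u r) else 0 := fun r' hr' => by
    simp only [mul_assoc, ← mul_sum, sum_fourierMode_mul_conj (hA hr') (hA hr)]
    split_ifs with h <;> simp only [h, mul_zero]
    ring
  rw [dft_eq_sum_mul_conj]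
  simp only [fourierMul, sum_mul]
  rw [sum_comm, sum_congr rfl hsum, sum_ite_eq' A r, if_pos hr, ← mul_assoc,
    inv_mul_cancel₀ (pow_ne_zero 2 gridSize_ne_zero), one_mul]

theorem sum_freqBox_dft_mul_fourierMode (u : GridFn K) (m : Fin (2 * K + 1) × Fin (2 * K + 1)) :
    ∑ r ∈ freqBox K, dft K u r * fourierMode K r m = u m := by
  simp only [dft_eq_sum_mul_conj, sum_mul, mul_sum]
  rw [sum_comm]
  simp only [mul_assoc, ← mul_sum, mul_comm (starRingEnd ℂ _), sum_freqBox_fourierMode_mul_conj,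
    mul_ite, mul_zero, sum_ite_eq, mem_univ, if_true]
  field_simp [gridSize_ne_zero]

/-- The factor `L²` is `h²N²`. -/
theorem ipN_fourierMul_left (L : ℝ) (u w : GridFn K) :
    ipN K L (fourierMul A σ u) w
      = (L : ℂ) ^ 2 * ∑ r ∈ A, σ r * dft K u r * starRingEnd ℂ (dft K w r) := by
  have hconj : ∀ r, ∑ s, fourierMode K r s * starRingEnd ℂ (w s)
      = (2 * K + 1 : ℂ) ^ 2 * starRingEnd ℂ (dft K w r) := fun r => by
    rw [dft_eq_sum_mul_conj, map_mul, map_inv₀, map_pow, conj_gridSize, ← mul_assoc,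
      mul_inv_cancel₀ (pow_ne_zero 2 gridSize_ne_zero), one_mul, map_sum]
    simp only [map_mul, Complex.conj_conj, mul_comm]
  have hswap : ∑ m, (∑ r ∈ A, σ r * dft K u r * fourierMode K r m) * starRingEnd ℂ (w m)
      = ∑ r ∈ A, σ r * dft K u r * ∑ m, fourierMode K r m * starRingEnd ℂ (w m) := by
    simp only [sum_mul, mul_sum]
    rw [sum_comm]
    exact sum_congr rfl fun _ _ => sum_congr rfl fun _ _ => by ring
  simp only [ipN, fourierMul]
  rw [hswap]
  simp only [hconj, mul_sum]
  refine sum_congr rfl fun r _ => ?_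
  have := gridSize_ne_zero (K := K)
  push_cast
  field_simp

theorem ipN_fourierMul_fourierMul (hA : A ⊆ freqBox K) (τ : ℤ × ℤ → ℂ) (L : ℝ)
    (u w : GridFn K) :
    ipN K L (fourierMul A σ u) (fourierMul A τ w)
      = (L : ℂ) ^ 2 * ∑ r ∈ A, σ r * starRingEnd ℂ (τ r) * dft K u r
          * starRingEnd ℂ (dft K w r) := by
  rw [ipN_fourierMul_left]
  congr 1
  refine sum_congr rfl fun r hr => ?_
  rw [dft_fourierMul hA w hr, map_mul]
  ring

end Multipliers

section SpectralOperators

variable {K : ℕ} {L : ℝ}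

def negLapSymbol (L : ℝ) (r : ℤ × ℤ) : ℝ :=
  4 * Real.pi ^ 2 * ((r.1 : ℝ) ^ 2 + (r.2 : ℝ) ^ 2) / L ^ 2

lemma negLapSymbol_neg (r : ℤ × ℤ) : negLapSymbol L (-r) = negLapSymbol L r := by
  simp [negLapSymbol]

lemma negLapSymbol_ne_zero (hL : L ≠ 0) {r : ℤ × ℤ} (hr : r ∈ freqs K) :
    negLapSymbol L r ≠ 0 := by
  have hr0 : r ≠ (0, 0) := (mem_erase.1 hr).1
  have : (r.1 : ℝ) ^ 2 + (r.2 : ℝ) ^ 2 ≠ 0 := by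
    contrapose! hr0
    have h1 : (r.1 : ℝ) = 0 := by nlinarith [sq_nonneg (r.1 : ℝ), sq_nonneg (r.2 : ℝ)]
    have h2 : (r.2 : ℝ) = 0 := by nlinarith [sq_nonneg (r.1 : ℝ), sq_nonneg (r.2 : ℝ)]
    exact Prod.ext (by exact_mod_cast h1) (by exact_mod_cast h2)
  unfold negLapSymbol
  positivity

lemma specOp_eq_fourierMul (α : ℤ) :
    specOp K L α = fourierMul (freqs K) (fun r => (negLapSymbol L r : ℂ) ^ α) := by
  funext w m
  simp only [specOp, fourierMul, exp_eq_fourierMode]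
  rfl

lemma lapN_eq_fourierMul :
    lapN K L = fourierMul (freqs K) (fun r => -(negLapSymbol L r : ℂ)) := by
  funext w m
  simp only [lapN, specOp_eq_fourierMul, fourierMul, zpow_one, ← sum_neg_distrib, neg_mul]

lemma D1_eq_fourierMul :
    D1 K L = fourierMul (freqs K) (fun r => 2 * Real.pi * I * r.1 / L) := by
  rw [← fourierMul_freqBox_of_zero (by simp)]
  funext w m
  simp only [D1, fourierMul, exp_eq_fourierMode]
  rfl

lemma D2_eq_fourierMul :
    D2 K L = fourierMul (freqs K) (fun r => 2 * Real.pi * I * r.2 / L) := by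
  rw [← fourierMul_freqBox_of_zero (by simp)]
  funext w m
  simp only [D2, fourierMul, exp_eq_fourierMode]
  rfl

lemma specOp_add_smul (α : ℤ) (u w : GridFn K) (c : ℂ) :
    specOp K L α (fun m => u m + c * w m) = fun m => specOp K L α u m + c * specOp K L α w m := by
  rw [specOp_eq_fourierMul, fourierMul_add_smul]

lemma specOp_smul (α : ℤ) (w : GridFn K) (c : ℂ) :
    specOp K L α (fun m => c * w m) = fun m => c * specOp K L α w m := by
  rw [specOp_eq_fourierMul, fourierMul_smul]

lemma lapN_add_smul (u w : GridFn K) (c : ℂ) :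
    lapN K L (fun m => u m + c * w m) = fun m => lapN K L u m + c * lapN K L w m := by
  rw [lapN_eq_fourierMul, fourierMul_add_smul]

lemma D1_add_smul (u w : GridFn K) (c : ℂ) :
    D1 K L (fun m => u m + c * w m) = fun m => D1 K L u m + c * D1 K L w m := by
  rw [D1_eq_fourierMul, fourierMul_add_smul]

lemma D2_add_smul (u w : GridFn K) (c : ℂ) :
    D2 K L (fun m => u m + c * w m) = fun m => D2 K L u m + c * D2 K L w m := by
  rw [D2_eq_fourierMul, fourierMul_add_smul]

theorem specOp_const (α : ℤ) (c : ℂ) : specOp K L α (fun _ => c) = fun _ => 0 := by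
  funext m
  rw [specOp_eq_fourierMul, fourierMul]
  exact sum_eq_zero fun r hr => by rw [dft_const c hr, mul_zero, zero_mul]

theorem specOp_specOp_neg (hL : L ≠ 0) (α : ℤ) (u : GridFn K)
    (m : Fin (2 * K + 1) × Fin (2 * K + 1)) :
    specOp K L α (specOp K L (-α) u) m = u m - dft K u (0, 0) := by
  have hcoef : ∀ r ∈ freqs K, (negLapSymbol L r : ℂ) ^ α * dft K (specOp K L (-α) u) r
      * fourierMode K r m = dft K u r * fourierMode K r m := fun r hr => by
    rw [specOp_eq_fourierMul, dft_fourierMul (freqs_subset_freqBox K) u hr, ← mul_assoc,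
      ← zpow_add₀ (ofReal_ne_zero.2 (negLapSymbol_ne_zero hL hr)), add_neg_cancel, zpow_zero,
      one_mul]
  rw [specOp_eq_fourierMul, fourierMul, sum_congr rfl hcoef, freqs_eq_erase,
    sum_erase_eq_sub (by simp [freqBox]), sum_freqBox_dft_mul_fourierMode, fourierMode_zero,
    mul_one]

theorem RealValued.specOp {u : GridFn K} (hu : RealValued u) (α : ℤ) :
    RealValued (specOp K L α u) := by
  intro m
  rw [← Complex.conj_eq_iff_im, specOp_eq_fourierMul, fourierMul, map_sum]
  simp only [map_mul, map_zpow₀, conj_ofReal, conj_dft_of_realValued hu, ← fourierMode_neg]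
  refine sum_nbij' Neg.neg Neg.neg (fun r hr => neg_mem_freqs hr) (fun r hr => neg_mem_freqs hr)
    (fun r _ => neg_neg r) (fun r _ => neg_neg r) fun r _ => ?_
  rw [negLapSymbol_neg]

theorem ipN_D1_add_ipN_D2 (u w : GridFn K) :
    ipN K L (D1 K L u) (D1 K L w) + ipN K L (D2 K L u) (D2 K L w)
      = ipN K L (specOp K L 1 u) w := by
  rw [D1_eq_fourierMul, D2_eq_fourierMul, specOp_eq_fourierMul,
    ipN_fourierMul_fourierMul (freqs_subset_freqBox K), ipN_fourierMul_fourierMul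
      (freqs_subset_freqBox K), ipN_fourierMul_left, ← mul_add, ← sum_add_distrib]
  congr 1
  refine sum_congr rfl fun r _ => ?_
  simp only [negLapSymbol, map_div₀, map_mul, map_ofNat, conj_ofReal, conj_I, map_intCast,
    zpow_one]
  push_cast
  linear_combination (-(4 * (Real.pi : ℂ) ^ 2 * ((r.1 : ℂ) ^ 2 + (r.2 : ℂ) ^ 2) / (L : ℂ) ^ 2)
    * dft K u r * starRingEnd ℂ (dft K w r)) * I_sq

theorem ipN_lapN_lapN (u w : GridFn K) :
    ipN K L (lapN K L u) (lapN K L w) = ipN K L (bilapN K L u) w := by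
  rw [lapN_eq_fourierMul, bilapN, specOp_eq_fourierMul,
    ipN_fourierMul_fourierMul (freqs_subset_freqBox K), ipN_fourierMul_left]
  congr 1
  refine sum_congr rfl fun r _ => ?_
  simp only [map_neg, conj_ofReal, zpow_ofNat]
  ring

theorem ipN_specOp_eq_conj (α : ℤ) (u w : GridFn K) :
    ipN K L (specOp K L α u) w = starRingEnd ℂ (ipN K L (specOp K L α w) u) := by
  simp only [specOp_eq_fourierMul, ipN_fourierMul_left, map_mul, map_sum, map_pow, conj_ofReal,
    map_zpow₀, Complex.conj_conj]
  congr 1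
  exact sum_congr rfl fun r _ => by ring

end SpectralOperators

section FirstVariation

variable {K : ℕ} {L : ℝ}

lemma conj_ipN (u w : GridFn K) : starRingEnd ℂ (ipN K L u w) = ipN K L w u := by
  simp only [ipN, map_mul, conj_ofReal, map_sum, Complex.conj_conj, mul_comm (u _)]

lemma re_ipN_comm (u w : GridFn K) : (ipN K L u w).re = (ipN K L w u).re := by
  rw [← conj_ipN, conj_re]

lemma re_ipN_self (u : GridFn K) :
    (ipN K L u u).re = (L / (2 * K + 1)) ^ 2 * ∑ m, ‖u m‖ ^ 2 := by
  simp only [ipN, mul_conj, re_ofReal_mul, ← ofReal_sum, ofReal_re, normSq_eq_norm_sq]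

lemma ipN_smul_add_left (c : ℂ) (u u' w : GridFn K) :
    ipN K L (fun m => c * u m + u' m) w = c * ipN K L u w + ipN K L u' w := by
  simp only [ipN, add_mul, sum_add_distrib, mul_assoc, ← mul_sum]
  ring

lemma ipN_ofReal_smul_right (a : ℝ) (u w : GridFn K) :
    ipN K L u (fun m => a * w m) = a * ipN K L u w := by
  simp only [ipN, map_mul, conj_ofReal, mul_sum]
  exact sum_congr rfl fun _ _ => by ring

lemma ipN_const_left (t : ℂ) {w : GridFn K} (hw : ZeroMean w) : ipN K L (fun _ => t) w = 0 := by
  rw [ipN, ← mul_sum, ← map_sum, hw, map_zero, mul_zero, mul_zero]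

theorem hasDerivAt_re_ipN_line (p q p' q' : GridFn K) :
    HasDerivAt (fun s : ℝ => (ipN K L (fun m => p m + s * q m) (fun m => p' m + s * q' m)).re)
      (ipN K L p q' + ipN K L q p').re 0 := by
  have hexpand : ∀ s : ℝ, ipN K L (fun m => p m + s * q m) (fun m => p' m + s * q' m)
      = ipN K L p p' + s * (ipN K L p q' + ipN K L q p') + (s : ℂ) ^ 2 * ipN K L q q' := by
    intro s
    simp only [ipN, map_add, map_mul, conj_ofReal, mul_sum, ← sum_add_distrib]
    exact sum_congr rfl fun _ _ => by ring
  have hre : ∀ s : ℝ, (ipN K L (fun m => p m + s * q m) (fun m => p' m + s * q' m)).re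
      = (ipN K L p p').re + s * (ipN K L p q' + ipN K L q p').re + s ^ 2 * (ipN K L q q').re :=
    fun s => by simp only [hexpand, add_re, re_ofReal_mul, ← ofReal_pow]
  simp only [hre]
  have hid := hasDerivAt_id' (0 : ℝ)
  exact (((hid.mul_const _).const_add _).add ((hid.pow 2).mul_const _)).congr_deriv (by norm_num)

lemma EN_eq_ipN (ε : ℝ) (z : GridFn K) :
    EN K L ε z
      = (L / (2 * K + 1)) ^ 2 * ∑ m, ((1 / 4) * (z m).re ^ 4 + ((1 - ε) / 2) * (z m).re ^ 2)
        - ((ipN K L (D1 K L z) (D1 K L z)).re + (ipN K L (D2 K L z) (D2 K L z)).re)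
        + (1 / 2) * (ipN K L (lapN K L z) (lapN K L z)).re := by
  simp only [EN, gradSqN, re_ipN_self, sum_add_distrib, sum_sub_distrib, ← mul_sum]
  ring

lemma hasDerivAt_sum_local_line (ε : ℝ) (v w : GridFn K) :
    HasDerivAt (fun s : ℝ => ∑ m, ((1 / 4) * (v m + s * w m).re ^ 4
        + ((1 - ε) / 2) * (v m + s * w m).re ^ 2))
      (∑ m, ((v m).re ^ 3 + (1 - ε) * (v m).re) * (w m).re) 0 := by
  simp only [add_re, re_ofReal_mul]
  have hid := hasDerivAt_id' (0 : ℝ)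
  refine HasDerivAt.fun_sum fun m _ => ?_
  have hline := (hid.mul_const (w m).re).const_add (v m).re
  exact (((hline.pow 4).const_mul _).add ((hline.pow 2).const_mul _)).congr_deriv
    (by norm_num; ring)

lemma ipN_muN (ε : ℝ) (v w : GridFn K) :
    ipN K L (muN K L ε v) w = ipN K L (fun m => v m ^ 3 + ((1 - ε : ℝ) : ℂ) * v m) w
      - 2 * ipN K L (specOp K L 1 v) w + ipN K L (bilapN K L v) w := by
  simp only [ipN, muN, lapN, mul_sum, ← sum_sub_distrib, ← sum_add_distrib]
  exact sum_congr rfl fun _ _ => by ring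

lemma re_ipN_local_of_realValued (ε : ℝ) {v w : GridFn K} (hv : RealValued v)
    (hw : RealValued w) :
    (ipN K L (fun m => v m ^ 3 + ((1 - ε : ℝ) : ℂ) * v m) w).re
      = (L / (2 * K + 1)) ^ 2 * ∑ m, ((v m).re ^ 3 + (1 - ε) * (v m).re) * (w m).re := by
  simp only [ipN, re_ofReal_mul, re_sum]
  congr 1
  refine sum_congr rfl fun m _ => ?_
  simp [pow_succ, mul_re, hv m, hw m]

theorem hasDerivAt_EN_line (ε : ℝ) {v w : GridFn K} (hv : RealValued v) (hw : RealValued w) :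
    HasDerivAt (fun s : ℝ => EN K L ε (fun m => v m + s * w m))
      (ipN K L (muN K L ε v) w).re 0 := by
  simp only [EN_eq_ipN, D1_add_smul, D2_add_smul, lapN_add_smul]
  have hquad (T : GridFn K → GridFn K) :=
    hasDerivAt_re_ipN_line (L := L) (T v) (T w) (T v) (T w)
  have h := (((hasDerivAt_sum_local_line ε v w).const_mul ((L / (2 * K + 1)) ^ 2)).sub
    ((hquad (D1 K L)).add (hquad (D2 K L)))).add ((hquad (lapN K L)).const_mul (1 / 2 : ℝ))
  refine h.congr_deriv ?_
  rw [ipN_muN, ← ipN_D1_add_ipN_D2, ← ipN_lapN_lapN, ← re_ipN_local_of_realValued ε hv hw]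
  simp only [add_re, sub_re, mul_re, re_ofNat, im_ofNat, zero_mul, sub_zero]
  rw [re_ipN_comm (D1 K L w), re_ipN_comm (D2 K L w), re_ipN_comm (lapN K L w)]
  ring

theorem hasDerivAt_negNormSq_line (Z w : GridFn K) :
    HasDerivAt (fun s : ℝ => negNormSq K L (fun m => Z m + s * w m))
      (2 * (ipN K L (invNegLapN K L Z) w).re) 0 := by
  simp only [negNormSq, invNegLapN, specOp_add_smul]
  refine (hasDerivAt_re_ipN_line _ _ _ _).congr_deriv ?_
  rw [add_re, ipN_specOp_eq_conj (-1) w Z, conj_re]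
  ring

def gradGN (K : ℕ) (L ε M a b c : ℝ) (u1 u0 v : GridFn K) : GridFn K := fun m =>
  (M : ℂ)⁻¹ * invNegLapN K L (fun m => (a : ℂ) * v m + (b : ℂ) * u1 m + (c : ℂ) * u0 m) m
    + muN K L ε v m

theorem hasDerivAt_GN_line (ε M : ℝ) {a : ℝ} (ha : a ≠ 0) (b c : ℝ) (u1 u0 : GridFn K)
    {v w : GridFn K} (hv : RealValued v) (hw : RealValued w) :
    HasDerivAt (fun s : ℝ => GN K L ε M a b c u1 u0 (fun m => v m + s * w m))
      (ipN K L (gradGN K L ε M a b c u1 u0 v) w).re 0 := by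
  unfold gradGN
  set Z : GridFn K := fun m => (a : ℂ) * v m + (b : ℂ) * u1 m + (c : ℂ) * u0 m
  have hline : ∀ s : ℝ, (fun m => (a : ℂ) * (v m + s * w m) + (b : ℂ) * u1 m + (c : ℂ) * u0 m)
      = fun m => Z m + s * (a * w m) := fun s => funext fun m => by ring
  simp only [GN, hline]
  refine (((hasDerivAt_negNormSq_line Z _).const_mul (1 / (2 * M * a))).add
    (hasDerivAt_EN_line ε hv hw)).congr_deriv ?_
  rw [ipN_smul_add_left, ipN_ofReal_smul_right, add_re, ← ofReal_inv, re_ofReal_mul,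
    re_ofReal_mul]
  field_simp

end FirstVariation

section CriticalPoints

variable {K : ℕ} {L : ℝ}

theorem realValued_gradGN (ε M a b c : ℝ) {u1 u0 v : GridFn K} (hu1 : RealValued u1)
    (hu0 : RealValued u0) (hv : RealValued v) :
    RealValued (gradGN K L ε M a b c u1 u0 v) := by
  have hZ : RealValued fun m => (a : ℂ) * v m + (b : ℂ) * u1 m + (c : ℂ) * u0 m := fun m => by
    simp [hv m, hu1 m, hu0 m]
  intro m
  simp [gradGN, muN, lapN, bilapN, invNegLapN, hZ.specOp (L := L) (-1) m,
    hv.specOp (L := L) 1 m, hv.specOp (L := L) 2 m, pow_succ, hv m]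

theorem forall_re_ipN_eq_zero_iff_exists_const (hL : L ≠ 0) {g : GridFn K} (hg : RealValued g) :
    (∀ w, RealValued w → ZeroMean w → (ipN K L g w).re = 0) ↔ ∃ t, ∀ m, g m = t := by
  constructor
  · intro h
    -- `t` is the mean of `g`.
    set t := dft K g (0, 0)
    have ht : t.im = 0 := by
      rw [← Complex.conj_eq_iff_im, conj_dft_of_realValued hg, Prod.neg_mk, neg_zero]
    have hmean : ZeroMean fun m => g m - t := by
      have := gridSize_ne_zero (K := K)
      rw [ZeroMean, sum_sub_distrib, sum_const, card_univ, show t = _ from dft_zero g]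
      simp only [Fintype.card_prod, Fintype.card_fin, nsmul_eq_mul]
      push_cast
      field_simp
      ring
    have hzero := h _ (fun m => by simp [hg m, ht]) hmean
    have hsplit := ipN_smul_add_left (L := L) 1 (fun m => g m - t) (fun _ => t) (fun m => g m - t)
    simp only [one_mul, sub_add_cancel, ipN_const_left t hmean, add_zero] at hsplit
    rw [hsplit, re_ipN_self] at hzero
    have hsq := (sum_eq_zero_iff_of_nonneg fun m _ => sq_nonneg ‖g m - t‖).1
      ((mul_eq_zero.1 hzero).resolve_left (by positivity))
    exact ⟨t, fun m => sub_eq_zero.1 (by simpa using hsq m (mem_univ m))⟩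
  · rintro ⟨t, ht⟩ w _ hw
    rw [funext ht, ipN_const_left t hw, zero_re]

theorem eq_smul_lapN_iff_exists_const (hL : L ≠ 0) {M : ℝ} (hM : M ≠ 0) {Z μ : GridFn K}
    (hZ : ∑ m, Z m = 0) :
    (∀ m, Z m = M * lapN K L μ m) ↔ ∃ t, ∀ m, (M : ℂ)⁻¹ * invNegLapN K L Z m + μ m = t := by
  have hM' : (M : ℂ) ≠ 0 := ofReal_ne_zero.2 hM
  constructor
  · intro h
    refine ⟨dft K μ (0, 0), fun m => ?_⟩
    have hZ' : Z = fun m => -(M : ℂ) * specOp K L 1 μ m := funext fun m => by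
      rw [h, lapN]
      ring
    have hcancel := specOp_specOp_neg hL (-1) μ m
    rw [neg_neg] at hcancel
    simp only [invNegLapN, hZ', specOp_smul, hcancel]
    field_simp
    ring
  · rintro ⟨t, ht⟩ m
    have hg : (fun _ => t) = fun m => μ m + (M : ℂ)⁻¹ * specOp K L (-1) Z m :=
      funext fun m => by rw [← ht m, invNegLapN, add_comm]
    have hconst := congrFun (specOp_const (K := K) (L := L) 1 t) m
    simp only [hg, specOp_add_smul, specOp_specOp_neg hL 1, dft_zero, hZ, mul_zero,
      sub_zero] at hconst
    rw [lapN]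
    field_simp at hconst ⊢
    linear_combination hconst

end CriticalPoints

theorem bdf2_pfc_iff_critical_point_general
    (K : ℕ) (L : ℝ) (hL : 0 < L) (ε : ℝ) (M : ℝ) (hM : 0 < M)
    (a : ℝ) (ha : 0 < a) (b c : ℝ) (u1 u0 v : GridFn K)
    (hu1 : RealValued u1) (hu0 : RealValued u0) (hv : RealValued v)
    (hmass : (a : ℂ) * (∑ s, v s) + (b : ℂ) * (∑ s, u1 s) + (c : ℂ) * (∑ s, u0 s) = 0) :
    (∀ m, (a : ℂ) * v m + (b : ℂ) * u1 m + (c : ℂ) * u0 m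
        = (M : ℂ) * lapN K L (muN K L ε v) m) ↔
    (∀ w : GridFn K, RealValued w → ZeroMean w →
      HasDerivAt (fun s : ℝ => GN K L ε M a b c u1 u0 (fun m => v m + (s : ℂ) * w m))
        0 0) := by
  have hZ : ∑ m, ((a : ℂ) * v m + (b : ℂ) * u1 m + (c : ℂ) * u0 m) = 0 := by
    simpa only [sum_add_distrib, mul_sum] using hmass
  have hcrit : ∀ w, RealValued w →
      (HasDerivAt (fun s : ℝ => GN K L ε M a b c u1 u0 (fun m => v m + (s : ℂ) * w m)) 0 0
        ↔ (ipN K L (gradGN K L ε M a b c u1 u0 v) w).re = 0) := fun w hw =>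
    have hderiv := hasDerivAt_GN_line ε M ha.ne' b c u1 u0 hv hw
    ⟨fun h => hderiv.unique h, fun h => h ▸ hderiv⟩
  have hg := realValued_gradGN (L := L) ε M a b c hu1 hu0 hv
  rw [eq_smul_lapN_iff_exists_const hL.ne' hM.ne' hZ]
  refine (forall_re_ipN_eq_zero_iff_exists_const hL.ne' hg).symm.trans ?_
  exact forall_congr' fun w => forall_congr' fun hw => forall_congr' fun _ => (hcrit w hw).symm

/-- `v` solves the fully discrete BDF2–PFC equation
`a v + b u¹ + c u⁰ = M Δ_N(μ_N(v))` if and only if `v` is a critical point of `G_N`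
along mass-conserving (zero-mean) directions. -/
theorem bdf2_pfc_iff_critical_point
    (K : ℕ) (hK : 1 ≤ K) (L : ℝ) (hL : 0 < L) (ε : ℝ) (M : ℝ) (hM : 0 < M)
    (a : ℝ) (ha : 0 < a) (b c : ℝ) (u1 u0 v : GridFn K)
    (hu1 : RealValued u1) (hu0 : RealValued u0) (hv : RealValued v)
    (hmass : (a : ℂ) * (∑ s, v s) + (b : ℂ) * (∑ s, u1 s) + (c : ℂ) * (∑ s, u0 s) = 0) :
    (∀ m, (a : ℂ) * v m + (b : ℂ) * u1 m + (c : ℂ) * u0 m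
        = (M : ℂ) * lapN K L (muN K L ε v) m) ↔
    (∀ w : GridFn K, RealValued w → ZeroMean w →
      HasDerivAt (fun s : ℝ => GN K L ε M a b c u1 u0 (fun m => v m + (s : ℂ) * w m))
        0 0) :=
  bdf2_pfc_iff_critical_point_general K L hL ε M hM a ha b c u1 u0 v hu1 hu0 hv hmass
end
end

section
/- Fix K ∈ ℕ with K ≥ 1, N = 2K+1, L > 0, ε ∈ ℝ, M > 0, dt > 0, and let u¹, v be real-valued grid functions satisfying the mass constraint ∑_s v(s) = ∑_s u¹(s). Set a = 1/dt and define G_N(z) = (1/(2Ma))·‖a·z − a·u¹‖₋₁,N² + 2·E_N((z + u¹)/2) for real-valued grid functions z, and μ_N(y) = y³ + (1−ε)y + 2Δ_N y + Δ_N² y. Then the following are equivalent: (i) v solves the fully discrete midpoint-rule PFC equation (v − u¹)/dt = M·Δ_N(μ_N((v + u¹)/2)) (equality of grid functions); (ii) v is a critical point of G_N along mass-conserving directions, i.e., for every real-valued grid function w with zero mean, the function s ↦ G_N(v + s·w) has derivative 0 at s = 0. -/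
open Complex

noncomputable section

/-- The midpoint-rule objective
`G_N(z) = (1/(2Ma))‖a z − a u¹‖₋₁,N² + 2 E_N((z + u¹)/2)` with `a = 1/dt`. -/
def GNmp (K : ℕ) (L ε M a : ℝ) (u1 : GridFn K) (z : GridFn K) : ℝ :=
  (1 / (2 * M * a)) * negNormSq K L (fun m => (a : ℂ) * z m - (a : ℂ) * u1 m)
    + 2 * EN K L ε (fun m => (z m + u1 m) / 2)


/-!
With `φ = (v + u¹)/2` and `X = v − u¹`, the derivative of `s ↦ G_N(v + s w)` at `0` is
`Re (μ_N(φ) + (a/M)(−Δ_N)⁻¹X, w)_N`: for the energy this is summation by parts, which on the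
grid is Parseval's identity for the discrete Fourier transform, and for the `‖·‖₋₁,N` term
it is the self-adjointness of `(−Δ_N)⁻¹`. For the real grid function
`G = μ_N(φ) + (a/M)(−Δ_N)⁻¹X` this vanishes for every real zero-mean `w` exactly when `G`
is constant (test against `δ_m − δ_0`), i.e. when `Δ_N G = 0`. Since `X` has zero mean,
`Δ_N(−Δ_N)⁻¹X = −X`, so `Δ_N G = 0` is the midpoint equation `X/dt = M Δ_N μ_N(φ)`.
-/

open Finset ComplexConjugate

theorem IsPrimitiveRoot.sum_range_zpow_mul {R : Type*} [Field R] {ζ : R} {n : ℕ}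
    (hζ : IsPrimitiveRoot ζ n) (t a : ℤ) :
    ∑ k ∈ range n, ζ ^ (t * (a + k)) = if (n : ℤ) ∣ t then (n : R) else 0 := by
  rcases Nat.eq_zero_or_pos n with rfl | hn
  · simp
  have hterm : ∀ k : ℕ, ζ ^ (t * (a + k)) = (ζ ^ t) ^ a * (ζ ^ t) ^ k := fun k => by
    rw [← zpow_natCast, ← zpow_mul, ← zpow_mul, ← zpow_add₀ (hζ.ne_zero hn.ne'), mul_add]
  simp_rw [hterm, ← mul_sum]
  split_ifs with hdvd
  · simp [(hζ.zpow_eq_one_iff_dvd t).mpr hdvd]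
  · have hne : ζ ^ t ≠ 1 := fun h => hdvd ((hζ.zpow_eq_one_iff_dvd t).mp h)
    have hpow : (ζ ^ t) ^ n = 1 := by rw [← zpow_natCast, ← zpow_mul, mul_comm, zpow_mul,
      zpow_natCast, hζ.pow_eq_one, one_zpow]
    rw [geom_sum_eq hne, hpow, sub_self, zero_div, mul_zero]

theorem hasDerivAt_re_mul_conj (a b c d : ℂ) :
    HasDerivAt (fun s : ℝ => ((a + s * b) * conj (c + s * d)).re)
      ((b * conj c + a * conj d).re) 0 := by
  have hpoly : (fun s : ℝ => ((a + s * b) * conj (c + s * d)).re) = fun s =>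
      (a * conj c).re + s * (b * conj c + a * conj d).re + s ^ 2 * (b * conj d).re := by
    ext s
    simp only [map_add, map_mul, Complex.conj_ofReal, Complex.mul_re, Complex.add_re,
      Complex.add_im, Complex.mul_im, Complex.ofReal_re, Complex.ofReal_im, Complex.conj_re,
      Complex.conj_im]
    ring
  rw [hpoly]
  simpa using (((hasDerivAt_id (0 : ℝ)).mul_const _).const_add _).fun_add
    ((hasDerivAt_pow 2 (0 : ℝ)).mul_const ((b * conj d).re))

theorem hasDerivAt_norm_add_mul_sq (z y : ℂ) :
    HasDerivAt (fun s : ℝ => ‖z + s * y‖ ^ 2) (2 * (z * conj y).re) 0 := by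
  have h := hasDerivAt_re_mul_conj z y z y
  simp_rw [Complex.mul_conj, Complex.ofReal_re, ← Complex.sq_norm] at h
  convert h using 1
  have hswap : (y * conj z).re = (z * conj y).re := by
    rw [← Complex.conj_re, map_mul, conj_conj, mul_comm]
  rw [Complex.add_re, hswap]
  ring

theorem hasDerivAt_re_add_mul_pow (z y : ℂ) (n : ℕ) :
    HasDerivAt (fun s : ℝ => (z + s * y).re ^ n) (n * z.re ^ (n - 1) * y.re) 0 := by
  simp_rw [Complex.add_re, Complex.re_ofReal_mul]
  simpa using (((hasDerivAt_id (0 : ℝ)).mul_const y.re).const_add z.re).fun_pow n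

namespace PFC

variable {K : ℕ}

lemma gridSize_ne_zero : (2 * K + 1 : ℂ) ≠ 0 := by exact_mod_cast (2 * K).succ_ne_zero

def gridRoot (K : ℕ) : ℂ := exp (2 * Real.pi * I / (2 * K + 1))

lemma isPrimitiveRoot_gridRoot : IsPrimitiveRoot (gridRoot K) (2 * K + 1) := by
  simpa [gridRoot] using Complex.isPrimitiveRoot_exp (2 * K + 1) (2 * K).succ_ne_zero

lemma dvd_iff_eq_zero_of_abs_le {t : ℤ} (ht : |t| ≤ 2 * K) :
    (2 * K + 1 : ℤ) ∣ t ↔ t = 0 :=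
  ⟨fun h => Int.eq_zero_of_abs_lt_dvd h (by omega), fun h => h ▸ dvd_zero _⟩

lemma sum_fin_gridRoot_zpow (t : ℤ) (ht : |t| ≤ 2 * K) :
    ∑ j : Fin (2 * K + 1), gridRoot K ^ (t * (j : ℕ)) =
      if t = 0 then (2 * K + 1 : ℂ) else 0 := by
  rw [Fin.sum_univ_eq_sum_range (fun j => gridRoot K ^ (t * j))]
  simpa [dvd_iff_eq_zero_of_abs_le ht] using
    (isPrimitiveRoot_gridRoot (K := K)).sum_range_zpow_mul t 0

lemma sum_Icc_gridRoot_zpow (t : ℤ) (ht : |t| ≤ 2 * K) :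
    ∑ r ∈ Icc (-(K : ℤ)) K, gridRoot K ^ (t * r) =
      if t = 0 then (2 * K + 1 : ℂ) else 0 := by
  rw [Int.Icc_eq_finset_map, sum_map, show (K + 1 - -(K : ℤ)).toNat = 2 * K + 1 by omega]
  simpa [dvd_iff_eq_zero_of_abs_le ht] using
    (isPrimitiveRoot_gridRoot (K := K)).sum_range_zpow_mul t (-K)

def gridChar (K : ℕ) (r : ℤ × ℤ) (m : Fin (2 * K + 1) × Fin (2 * K + 1)) : ℂ :=
  Complex.exp ((2 * Real.pi * Complex.I) *
    ((r.1 : ℂ) * ((m.1 : ℕ) : ℂ) + (r.2 : ℂ) * ((m.2 : ℕ) : ℂ)) / (2 * K + 1))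

lemma gridChar_eq_zpow (r : ℤ × ℤ) (m : Fin (2 * K + 1) × Fin (2 * K + 1)) :
    gridChar K r m = gridRoot K ^ (r.1 * (m.1 : ℕ) + r.2 * (m.2 : ℕ)) := by
  rw [gridRoot, ← Complex.exp_int_mul, gridChar]
  congr 1
  push_cast
  ring

lemma gridChar_zero (m : Fin (2 * K + 1) × Fin (2 * K + 1)) : gridChar K (0, 0) m = 1 := by
  simp [gridChar]

lemma conj_gridChar (r : ℤ × ℤ) (m : Fin (2 * K + 1) × Fin (2 * K + 1)) :
    conj (gridChar K r m) = gridChar K (-r) m := by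
  rw [gridChar, gridChar, ← Complex.exp_conj]
  congr 1
  simp only [map_mul, map_div₀, map_add, Complex.conj_I, Complex.conj_ofReal, map_ofNat,
    map_one, map_intCast, map_natCast, Prod.fst_neg, Prod.snd_neg]
  push_cast
  ring

lemma gridChar_mul_conj (r r' : ℤ × ℤ) (m m' : Fin (2 * K + 1) × Fin (2 * K + 1)) :
    gridChar K r m * conj (gridChar K r' m') =
      gridRoot K ^ (r.1 * (m.1 : ℕ) - r'.1 * (m'.1 : ℕ)) *
        gridRoot K ^ (r.2 * (m.2 : ℕ) - r'.2 * (m'.2 : ℕ)) := by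
  have hζ : gridRoot K ≠ 0 := Complex.exp_ne_zero _
  rw [conj_gridChar, gridChar_eq_zpow, gridChar_eq_zpow, ← zpow_add₀ hζ, ← zpow_add₀ hζ]
  congr 1
  simp only [Prod.fst_neg, Prod.snd_neg]
  ring

abbrev freqBox (K : ℕ) : Finset (ℤ × ℤ) := Icc (-(K : ℤ)) K ×ˢ Icc (-(K : ℤ)) K

lemma zero_mem_freqBox : ((0, 0) : ℤ × ℤ) ∈ freqBox K := by
  simp [mem_product]

lemma neg_mem_freqBox {r : ℤ × ℤ} (hr : r ∈ freqBox K) : -r ∈ freqBox K := by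
  simp only [mem_product, mem_Icc, Prod.fst_neg, Prod.snd_neg] at hr ⊢
  omega

lemma abs_sub_le_of_mem_Icc {a b : ℤ} (ha : a ∈ Icc (-(K : ℤ)) K)
    (hb : b ∈ Icc (-(K : ℤ)) K) :
    |a - b| ≤ 2 * K := by
  rw [mem_Icc] at ha hb
  rw [abs_le]
  omega

lemma sum_gridChar_mul_conj {r r' : ℤ × ℤ} (hr : r ∈ freqBox K) (hr' : r' ∈ freqBox K) :
    ∑ m, gridChar K r m * conj (gridChar K r' m) =
      if r = r' then (2 * K + 1 : ℂ) ^ 2 else 0 := by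
  rw [mem_product] at hr hr'
  have hterm : ∀ m : Fin (2 * K + 1) × Fin (2 * K + 1), gridChar K r m * conj (gridChar K r' m)
      = gridRoot K ^ ((r.1 - r'.1) * (m.1 : ℕ)) * gridRoot K ^ ((r.2 - r'.2) * (m.2 : ℕ)) := by
    intro m
    rw [gridChar_mul_conj, sub_mul, sub_mul]
  simp_rw [hterm, Fintype.sum_prod_type, ← mul_sum, ← sum_mul,
    sum_fin_gridRoot_zpow _ (abs_sub_le_of_mem_Icc hr.1 hr'.1),
    sum_fin_gridRoot_zpow _ (abs_sub_le_of_mem_Icc hr.2 hr'.2), Prod.ext_iff, sub_eq_zero]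
  split_ifs <;> simp_all [sq]

lemma sum_freqBox_gridChar_mul_conj (m m' : Fin (2 * K + 1) × Fin (2 * K + 1)) :
    ∑ r ∈ freqBox K, gridChar K r m * conj (gridChar K r m') =
      if m = m' then (2 * K + 1 : ℂ) ^ 2 else 0 := by
  have hterm : ∀ r : ℤ × ℤ, gridChar K r m * conj (gridChar K r m')
      = gridRoot K ^ (((m.1 : ℕ) - (m'.1 : ℕ) : ℤ) * r.1) *
          gridRoot K ^ (((m.2 : ℕ) - (m'.2 : ℕ) : ℤ) * r.2) := by
    intro r
    rw [gridChar_mul_conj]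
    congr 2 <;> ring
  have hle : ∀ i j : Fin (2 * K + 1), |((i : ℕ) - (j : ℕ) : ℤ)| ≤ 2 * K := fun i j => by
    rw [abs_le]
    omega
  simp_rw [hterm, sum_product, ← mul_sum, ← sum_mul, sum_Icc_gridRoot_zpow _ (hle _ _),
    Prod.ext_iff, Fin.ext_iff, sub_eq_zero, Nat.cast_inj]
  split_ifs <;> simp_all [sq]

lemma dft_eq (w : GridFn K) (r : ℤ × ℤ) :
    dft K w r = ((2 * K + 1 : ℂ) ^ 2)⁻¹ * ∑ s, w s * conj (gridChar K r s) := by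
  rw [dft]
  congr 2 with s
  rw [conj_gridChar, gridChar]
  congr 2
  push_cast [Prod.fst_neg, Prod.snd_neg]
  ring

lemma dft_zero (w : GridFn K) : dft K w (0, 0) = ((2 * K + 1 : ℂ) ^ 2)⁻¹ * ∑ s, w s := by
  simp [dft]

lemma dft_add_mul (f g : GridFn K) (c : ℂ) (r : ℤ × ℤ) :
    dft K (fun m => f m + c * g m) r = dft K f r + c * dft K g r := by
  simp only [dft_eq, add_mul, sum_add_distrib, mul_add, mul_sum]
  exact congrArg _ (sum_congr rfl fun s _ => by ring)

lemma dft_const_mul (c : ℂ) (f : GridFn K) (r : ℤ × ℤ) :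
    dft K (fun m => c * f m) r = c * dft K f r := by
  simp only [dft_eq, mul_assoc, ← mul_sum]
  ring

lemma conj_dft {w : GridFn K} (hw : RealValued w) (r : ℤ × ℤ) :
    conj (dft K w r) = dft K w (-r) := by
  simp_rw [dft_eq, map_mul, map_sum, map_mul, conj_conj, conj_gridChar, map_inv₀, map_pow,
    map_add, map_mul, map_ofNat, map_natCast, map_one, Complex.conj_eq_iff_im.mpr (hw _), neg_neg]

def fourierSum (K : ℕ) (c : ℤ × ℤ → ℂ) : GridFn K := fun m =>
  ∑ r ∈ freqBox K, c r * gridChar K r m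

theorem fourierSum_dft (w : GridFn K) : fourierSum K (dft K w) = w := by
  ext m
  have hN : ((2 * K + 1 : ℂ) ^ 2) ≠ 0 := pow_ne_zero 2 gridSize_ne_zero
  simp_rw [fourierSum, dft_eq, mul_sum, sum_mul]
  rw [sum_comm]
  simp_rw [mul_assoc, ← mul_sum, mul_comm (conj _), sum_freqBox_gridChar_mul_conj]
  simp only [mul_ite, mul_zero, sum_ite_eq, mem_univ, if_true]
  rw [mul_comm (w m), inv_mul_cancel_left₀ hN]

theorem dft_fourierSum (c : ℤ × ℤ → ℂ) {r : ℤ × ℤ} (hr : r ∈ freqBox K) :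
    dft K (fourierSum K c) r = c r := by
  have hN : ((2 * K + 1 : ℂ) ^ 2) ≠ 0 := pow_ne_zero 2 gridSize_ne_zero
  simp_rw [dft_eq, fourierSum, sum_mul]
  rw [sum_comm]
  simp_rw [mul_assoc, ← mul_sum]
  rw [sum_congr rfl fun r' hr' => by rw [sum_gridChar_mul_conj hr' hr]]
  simp only [mul_ite, mul_zero, sum_ite_eq', hr, if_true]
  rw [mul_comm (c r), inv_mul_cancel_left₀ hN]

theorem sum_mul_conj_fourierSum (f : GridFn K) (c : ℤ × ℤ → ℂ) :
    ∑ m, f m * conj (fourierSum K c m) =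
      (2 * K + 1 : ℂ) ^ 2 * ∑ r ∈ freqBox K, dft K f r * conj (c r) := by
  have hN : ((2 * K + 1 : ℂ) ^ 2) ≠ 0 := pow_ne_zero 2 gridSize_ne_zero
  simp_rw [fourierSum, map_sum, mul_sum, dft_eq]
  rw [sum_comm]
  refine sum_congr rfl fun r _ => ?_
  rw [← mul_assoc, ← mul_assoc, mul_inv_cancel₀ hN, one_mul, sum_mul]
  refine sum_congr rfl fun m _ => ?_
  rw [map_mul]
  ring

lemma const_eq_fourierSum (c : ℂ) :
    (fun _ => c : GridFn K) = fourierSum K (fun r => if r = (0, 0) then c else 0) := by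
  ext m
  simp [fourierSum, ite_mul, gridChar_zero]

lemma dft_const (c : ℂ) {r : ℤ × ℤ} (hr : r ∈ freqBox K) :
    dft K (fun _ => c) r = if r = (0, 0) then c else 0 := by
  rw [const_eq_fourierSum, dft_fourierSum _ hr]

def fourierMul (K : ℕ) (p : ℤ × ℤ → ℂ) (w : GridFn K) : GridFn K :=
  fourierSum K (fun r => p r * dft K w r)

lemma dft_fourierMul (p : ℤ × ℤ → ℂ) (w : GridFn K) {r : ℤ × ℤ}
    (hr : r ∈ freqBox K) :
    dft K (fourierMul K p w) r = p r * dft K w r :=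
  dft_fourierSum _ hr

lemma fourierMul_congr {p q : ℤ × ℤ → ℂ} (h : ∀ r ∈ freqBox K, p r = q r)
    (w : GridFn K) :
    fourierMul K p w = fourierMul K q w := by
  ext m
  exact sum_congr rfl fun r hr => by simp only [h r hr]

lemma fourierMul_one (w : GridFn K) : fourierMul K (fun _ => 1) w = w := by
  simp_rw [fourierMul, one_mul, fourierSum_dft]

lemma fourierMul_fourierMul (p q : ℤ × ℤ → ℂ) (w : GridFn K) :
    fourierMul K p (fourierMul K q w) = fourierMul K (fun r => p r * q r) w := by
  ext m
  exact sum_congr rfl fun r hr => by simp only [dft_fourierMul _ _ hr, mul_assoc]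

lemma fourierMul_add_mul (p : ℤ × ℤ → ℂ) (f g : GridFn K) (c : ℂ) :
    fourierMul K p (fun m => f m + c * g m) =
      fun m => fourierMul K p f m + c * fourierMul K p g m := by
  ext m
  simp_rw [fourierMul, fourierSum, dft_add_mul, mul_sum, ← sum_add_distrib]
  exact sum_congr rfl fun r _ => by ring

lemma fourierMul_const_mul (p : ℤ × ℤ → ℂ) (c : ℂ) (f : GridFn K) :
    fourierMul K p (fun m => c * f m) = fun m => c * fourierMul K p f m := by
  ext m
  simp_rw [fourierMul, fourierSum, dft_const_mul, mul_sum]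
  exact sum_congr rfl fun r _ => by ring

lemma fourierMul_const (p : ℤ × ℤ → ℂ) (c : ℂ) :
    fourierMul K p (fun _ => c) = fun _ => p (0, 0) * c := by
  ext m
  rw [fourierMul, fourierSum, sum_congr rfl fun r hr => by rw [dft_const c hr]]
  simp [gridChar_zero]

theorem realValued_fourierMul {p : ℤ × ℤ → ℂ} (hp : ∀ r, conj (p r) = p (-r))
    {w : GridFn K} (hw : RealValued w) : RealValued (fourierMul K p w) := by
  intro m
  rw [← Complex.conj_eq_iff_im, fourierMul, fourierSum, map_sum]
  simp_rw [map_mul, hp, conj_dft hw, conj_gridChar]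
  exact sum_nbij' Neg.neg Neg.neg (fun r hr => neg_mem_freqBox hr)
    (fun r hr => neg_mem_freqBox hr) (fun r _ => neg_neg r) (fun r _ => neg_neg r) (fun _ _ => rfl)

theorem sum_fourierMul_mul_conj_fourierMul (p q : ℤ × ℤ → ℂ) (f g : GridFn K) :
    ∑ m, fourierMul K p f m * conj (fourierMul K q g m) =
      (2 * K + 1 : ℂ) ^ 2 *
        ∑ r ∈ freqBox K, p r * conj (q r) * (dft K f r * conj (dft K g r)) := by
  rw [fourierMul, fourierMul, sum_mul_conj_fourierSum]
  congr 1
  refine sum_congr rfl fun r hr => ?_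
  rw [dft_fourierSum _ hr, map_mul]
  ring

def lapSymbol (L : ℝ) (r : ℤ × ℤ) : ℝ :=
  4 * Real.pi ^ 2 * ((r.1 : ℝ) ^ 2 + (r.2 : ℝ) ^ 2) / L ^ 2

lemma lapSymbol_neg (L : ℝ) (r : ℤ × ℤ) : lapSymbol L (-r) = lapSymbol L r := by
  simp [lapSymbol]

lemma lapSymbol_ne_zero {L : ℝ} (hL : L ≠ 0) {r : ℤ × ℤ} (hr : r ≠ (0, 0)) :
    lapSymbol L r ≠ 0 := by
  have hpos : 0 < (r.1 : ℝ) ^ 2 + (r.2 : ℝ) ^ 2 := by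
    rcases r with ⟨r₁, r₂⟩
    by_cases h : r₁ = 0
    · have : (r₂ : ℝ) ≠ 0 := by simpa [h] using hr
      positivity
    · have : (r₁ : ℝ) ≠ 0 := by exact_mod_cast h
      positivity
  unfold lapSymbol
  positivity

/-- Zero at `r = 0` for every `α`, so that `specOp` becomes a multiplier on the whole box. -/
def specSymbol (L : ℝ) (α : ℤ) (r : ℤ × ℤ) : ℂ :=
  if r = (0, 0) then 0 else (lapSymbol L r : ℂ) ^ α

lemma conj_specSymbol (L : ℝ) (α : ℤ) (r : ℤ × ℤ) :
    conj (specSymbol L α r) = specSymbol L α r := by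
  unfold specSymbol
  split_ifs <;> simp [map_zpow₀]

lemma specSymbol_neg (L : ℝ) (α : ℤ) (r : ℤ × ℤ) :
    specSymbol L α (-r) = specSymbol L α r := by
  simp [specSymbol, lapSymbol_neg, Prod.ext_iff]

theorem specOp_eq_fourierMul (L : ℝ) (α : ℤ) :
    specOp K L α = fourierMul K (specSymbol L α) := by
  ext w m
  rw [specOp, freqs, fourierMul, fourierSum, ← add_sum_erase _ _ zero_mem_freqBox]
  simp only [specSymbol, if_true, zero_mul, zero_add]
  exact sum_congr rfl fun r hr => by rw [if_neg (ne_of_mem_erase hr)]; rfl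

lemma specOp_add_mul (L : ℝ) (α : ℤ) (f g : GridFn K) (c : ℂ) :
    specOp K L α (fun m => f m + c * g m) =
      fun m => specOp K L α f m + c * specOp K L α g m := by
  rw [specOp_eq_fourierMul]
  exact fourierMul_add_mul _ f g c

lemma specOp_const_mul (L : ℝ) (α : ℤ) (c : ℂ) (f : GridFn K) :
    specOp K L α (fun m => c * f m) = fun m => c * specOp K L α f m := by
  rw [specOp_eq_fourierMul]
  exact fourierMul_const_mul _ c f

lemma realValued_specOp (L : ℝ) (α : ℤ) {w : GridFn K} (hw : RealValued w) :
    RealValued (specOp K L α w) := by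
  rw [specOp_eq_fourierMul]
  exact realValued_fourierMul (fun r => by rw [conj_specSymbol, specSymbol_neg]) hw

lemma specOp_const (L : ℝ) (α : ℤ) (c : ℂ) : specOp K L α (fun _ => c) = 0 := by
  rw [specOp_eq_fourierMul, fourierMul_const]
  ext
  simp [specSymbol]

theorem specOp_specOp {L : ℝ} (hL : L ≠ 0) (α β : ℤ) (w : GridFn K) :
    specOp K L α (specOp K L β w) = specOp K L (α + β) w := by
  simp_rw [specOp_eq_fourierMul, fourierMul_fourierMul]
  refine fourierMul_congr (fun r _ => ?_) w
  unfold specSymbol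
  split_ifs with hr
  · simp
  · rw [zpow_add₀ (Complex.ofReal_ne_zero.mpr (lapSymbol_ne_zero hL hr))]

theorem specOp_exponent_zero (L : ℝ) (w : GridFn K) :
    specOp K L 0 w = fun m => w m - dft K w (0, 0) := by
  ext m
  simp only [specOp, zpow_zero, one_mul]
  rw [freqs, sum_erase_eq_sub zero_mem_freqBox]
  exact congrArg₂ _ (congrFun (fourierSum_dft w) m) (by simp)

theorem specOp_eq_zero_iff {L : ℝ} (hL : L ≠ 0) (α : ℤ) (G : GridFn K) :
    specOp K L α G = 0 ↔ ∃ c, G = fun _ => c := by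
  refine ⟨fun h => ⟨dft K G (0, 0), ?_⟩, fun ⟨c, hc⟩ => hc ▸ specOp_const L α c⟩
  have h0 := specOp_specOp hL (-α) α G
  rw [h, neg_add_cancel, specOp_exponent_zero, show (0 : GridFn K) = fun _ => 0 from rfl,
    specOp_const] at h0
  ext m
  exact sub_eq_zero.mp (congrFun h0 m).symm

lemma sum_specOp_mul_conj (L : ℝ) (α : ℤ) (u w : GridFn K) :
    ∑ m, specOp K L α u m * conj (w m) =
      (2 * K + 1 : ℂ) ^ 2 *
        ∑ r ∈ freqBox K, specSymbol L α r * (dft K u r * conj (dft K w r)) := by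
  conv_lhs => rw [← fourierMul_one w, specOp_eq_fourierMul]
  rw [sum_fourierMul_mul_conj_fourierMul]
  simp

theorem re_sum_specOp_mul_conj_comm (L : ℝ) (α : ℤ) (f g : GridFn K) :
    (∑ m, specOp K L α f m * conj (g m)).re = (∑ m, specOp K L α g m * conj (f m)).re := by
  rw [← Complex.conj_re (∑ m, specOp K L α g m * conj (f m)), sum_specOp_mul_conj,
    sum_specOp_mul_conj]
  simp only [map_mul, map_sum, conj_specSymbol, conj_conj, map_pow, map_add, map_ofNat,
    map_natCast, map_one]
  exact congrArg _ (congrArg _ (sum_congr rfl fun r _ => by ring))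

theorem sum_specOp_one_mul_conj_specOp_one (L : ℝ) (u w : GridFn K) :
    ∑ m, specOp K L 1 u m * conj (specOp K L 1 w m) = ∑ m, specOp K L 2 u m * conj (w m) := by
  rw [sum_specOp_mul_conj L 2, specOp_eq_fourierMul, sum_fourierMul_mul_conj_fourierMul]
  congr 1
  refine sum_congr rfl fun r _ => ?_
  rw [conj_specSymbol]
  unfold specSymbol
  split_ifs <;> simp [zpow_ofNat, sq]

lemma D1_eq_fourierMul (L : ℝ) :
    D1 K L = fourierMul K (fun r => 2 * Real.pi * Complex.I * (r.1 : ℂ) / (L : ℂ)) := rfl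

lemma D2_eq_fourierMul (L : ℝ) :
    D2 K L = fourierMul K (fun r => 2 * Real.pi * Complex.I * (r.2 : ℂ) / (L : ℂ)) := rfl

lemma D1_add_mul (L : ℝ) (f g : GridFn K) (c : ℂ) :
    D1 K L (fun m => f m + c * g m) = fun m => D1 K L f m + c * D1 K L g m := by
  rw [D1_eq_fourierMul]
  exact fourierMul_add_mul _ f g c

lemma D2_add_mul (L : ℝ) (f g : GridFn K) (c : ℂ) :
    D2 K L (fun m => f m + c * g m) = fun m => D2 K L f m + c * D2 K L g m := by
  rw [D2_eq_fourierMul]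
  exact fourierMul_add_mul _ f g c

lemma lapN_add_mul (L : ℝ) (f g : GridFn K) (c : ℂ) :
    lapN K L (fun m => f m + c * g m) = fun m => lapN K L f m + c * lapN K L g m := by
  ext m
  simp only [lapN, specOp_add_mul]
  ring

lemma gradSymbol_normSq (L : ℝ) (r : ℤ × ℤ) :
    2 * Real.pi * I * (r.1 : ℂ) / L * conj (2 * Real.pi * I * (r.1 : ℂ) / L) +
      2 * Real.pi * I * (r.2 : ℂ) / L * conj (2 * Real.pi * I * (r.2 : ℂ) / L) =
        specSymbol L 1 r := by
  unfold specSymbol lapSymbol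
  split_ifs with hr
  · simp [hr]
  · simp only [map_div₀, map_mul, Complex.conj_I, Complex.conj_ofReal, map_ofNat, map_intCast,
      zpow_one]
    push_cast
    linear_combination
      (-(4 * (Real.pi : ℂ) ^ 2 * ((r.1 : ℂ) ^ 2 + (r.2 : ℂ) ^ 2) / (L : ℂ) ^ 2)) *
        Complex.I_sq

theorem sum_D_mul_conj_D (L : ℝ) (u w : GridFn K) :
    ∑ m, (D1 K L u m * conj (D1 K L w m) + D2 K L u m * conj (D2 K L w m)) =
      ∑ m, specOp K L 1 u m * conj (w m) := by
  rw [sum_add_distrib, D1_eq_fourierMul, D2_eq_fourierMul, sum_fourierMul_mul_conj_fourierMul,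
    sum_fourierMul_mul_conj_fourierMul, sum_specOp_mul_conj, ← mul_add, ← sum_add_distrib]
  congr 1
  refine sum_congr rfl fun r _ => ?_
  rw [← gradSymbol_normSq]
  ring

lemma realValued_muN (L ε : ℝ) {φ : GridFn K} (hφ : RealValued φ) :
    RealValued (muN K L ε φ) := fun m => by
  simp [muN, lapN, bilapN, pow_succ, Complex.mul_im, hφ m, realValued_specOp L 1 hφ m,
    realValued_specOp L 2 hφ m]

lemma ipN_add_mul_left (L : ℝ) (f g h : GridFn K) (c : ℂ) :
    ipN K L (fun m => f m + c * g m) h = ipN K L f h + c * ipN K L g h := by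
  simp only [ipN, add_mul, sum_add_distrib, mul_add, mul_sum]
  exact congrArg _ (sum_congr rfl fun _ _ => by ring)

lemma ipN_ofReal_mul_right (L : ℝ) (f g : GridFn K) (c : ℝ) :
    ipN K L f (fun m => c * g m) = c * ipN K L f g := by
  simp only [ipN, map_mul, Complex.conj_ofReal, mul_sum]
  exact sum_congr rfl fun _ _ => by ring

lemma ipN_const_left (L : ℝ) (c : ℂ) {w : GridFn K} (hw : ZeroMean w) :
    ipN K L (fun _ => c) w = 0 := by
  rw [ipN, ← mul_sum, ← map_sum, hw, map_zero, mul_zero, mul_zero]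

lemma negNormSq_ofReal_mul (L : ℝ) (c : ℝ) (f : GridFn K) :
    negNormSq K L (fun m => c * f m) = c ^ 2 * negNormSq K L f := by
  simp only [negNormSq, invNegLapN, specOp_const_mul]
  rw [ipN_ofReal_mul_right, show (fun m => (c : ℂ) * specOp K L (-1) f m) =
    fun m => specOp K L (-1) f m + (c - 1 : ℂ) * specOp K L (-1) f m from by ext; ring,
    ipN_add_mul_left, ← one_add_mul, add_sub_cancel, ← mul_assoc, ← Complex.ofReal_mul,
    Complex.re_ofReal_mul, sq]

/-- The right-hand side is the derivative of `s ↦ E_N(φ + s g)` at `s = 0`. -/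
theorem re_ipN_muN (L ε : ℝ) {φ : GridFn K} (hφ : RealValued φ) (g : GridFn K) :
    (ipN K L (muN K L ε φ) g).re = (L / (2 * K + 1)) ^ 2 * ∑ m,
      ((φ m).re ^ 3 * (g m).re + (1 - ε) * (φ m).re * (g m).re
        - 2 * ((D1 K L φ m * conj (D1 K L g m)).re + (D2 K L φ m * conj (D2 K L g m)).re)
        + (lapN K L φ m * conj (lapN K L g m)).re) := by
  have hlap : ∑ m, lapN K L φ m * conj (g m) =
      -∑ m, (D1 K L φ m * conj (D1 K L g m) + D2 K L φ m * conj (D2 K L g m)) := by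
    simp only [lapN, neg_mul, sum_neg_distrib, sum_D_mul_conj_D]
  have hbilap :
      ∑ m, bilapN K L φ m * conj (g m) = ∑ m, lapN K L φ m * conj (lapN K L g m) := by
    simp only [bilapN, lapN, map_neg, neg_mul_neg, sum_specOp_one_mul_conj_specOp_one]
  have hlocal : ∀ m, (((φ m) ^ 3 + ((1 - ε : ℝ) : ℂ) * φ m) * conj (g m)).re =
      (φ m).re ^ 3 * (g m).re + (1 - ε) * (φ m).re * (g m).re := fun m => by
    simp [Complex.mul_re, pow_succ, hφ m]
    ring
  have hsplit : ∑ m, muN K L ε φ m * conj (g m) =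
      ∑ m, ((φ m) ^ 3 + ((1 - ε : ℝ) : ℂ) * φ m) * conj (g m)
        + ((2 : ℝ) : ℂ) * ∑ m, lapN K L φ m * conj (g m)
        + ∑ m, bilapN K L φ m * conj (g m) := by
    rw [mul_sum, ← sum_add_distrib, ← sum_add_distrib]
    exact sum_congr rfl fun m _ => by simp only [muN]; push_cast; ring
  rw [ipN, Complex.re_ofReal_mul, hsplit, hlap, hbilap]
  simp only [Complex.add_re, Complex.re_ofReal_mul, Complex.neg_re, Complex.re_sum, hlocal]
  rw [mul_neg, mul_sum, ← sum_neg_distrib, ← sum_add_distrib, ← sum_add_distrib]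
  exact congrArg _ (sum_congr rfl fun m _ => by ring)

theorem hasDerivAt_EN (L ε : ℝ) {φ : GridFn K} (hφ : RealValued φ) (g : GridFn K) :
    HasDerivAt (fun s : ℝ => EN K L ε (fun m => φ m + s * g m))
      (ipN K L (muN K L ε φ) g).re 0 := by
  have hexpand : (fun s : ℝ => EN K L ε (fun m => φ m + s * g m)) = fun s : ℝ =>
      (L / (2 * K + 1)) ^ 2 * ∑ m, (1 / 4 * (φ m + s * g m).re ^ 4
        + (1 - ε) / 2 * (φ m + s * g m).re ^ 2
        - (‖D1 K L φ m + s * D1 K L g m‖ ^ 2 + ‖D2 K L φ m + s * D2 K L g m‖ ^ 2)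
        + 1 / 2 * ‖lapN K L φ m + s * lapN K L g m‖ ^ 2) := by
    ext s
    simp only [EN, gradSqN, D1_add_mul, D2_add_mul, lapN_add_mul]
  rw [hexpand, re_ipN_muN L ε hφ]
  refine HasDerivAt.const_mul _ (HasDerivAt.fun_sum fun m _ => ?_)
  convert (((hasDerivAt_re_add_mul_pow (φ m) (g m) 4).const_mul (1 / 4)).fun_add
    ((hasDerivAt_re_add_mul_pow (φ m) (g m) 2).const_mul ((1 - ε) / 2))).fun_sub
    ((hasDerivAt_norm_add_mul_sq _ _).fun_add (hasDerivAt_norm_add_mul_sq _ _)) |>.fun_add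
    ((hasDerivAt_norm_add_mul_sq _ _).const_mul (1 / 2)) using 1
  norm_num
  ring

theorem hasDerivAt_negNormSq (L : ℝ) (f g : GridFn K) :
    HasDerivAt (fun s : ℝ => negNormSq K L (fun m => f m + s * g m))
      (2 * (ipN K L (invNegLapN K L f) g).re) 0 := by
  have hexpand : (fun s : ℝ => negNormSq K L (fun m => f m + s * g m)) = fun s : ℝ =>
      (L / (2 * K + 1)) ^ 2 * ∑ m,
        ((invNegLapN K L f m + s * invNegLapN K L g m) * conj (f m + s * g m)).re := by
    ext s
    simp only [negNormSq, ipN, invNegLapN, specOp_add_mul, Complex.re_ofReal_mul, Complex.re_sum]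
  have hsymm := re_sum_specOp_mul_conj_comm L (-1) f g
  rw [hexpand]
  refine (HasDerivAt.const_mul _ (HasDerivAt.fun_sum fun m _ =>
    hasDerivAt_re_mul_conj (invNegLapN K L f m) (invNegLapN K L g m) (f m) (g m))).congr_deriv ?_
  simp only [ipN, invNegLapN, Complex.re_ofReal_mul, Complex.add_re, sum_add_distrib,
    ← Complex.re_sum, hsymm]
  ring

theorem hasDerivAt_GNmp (L ε M a : ℝ) {u1 v : GridFn K}
    (hφ : RealValued (fun m => (v m + u1 m) / 2)) (w : GridFn K) :
    HasDerivAt (fun s : ℝ => GNmp K L ε M a u1 (fun m => v m + s * w m))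
      (ipN K L (fun m => muN K L ε (fun m' => (v m' + u1 m') / 2) m
        + ((a / M : ℝ) : ℂ) * invNegLapN K L (fun m' => v m' - u1 m') m) w).re 0 := by
  have hsplit : (fun s : ℝ => GNmp K L ε M a u1 (fun m => v m + s * w m)) = fun s : ℝ =>
      1 / (2 * M * a) * (a ^ 2 * negNormSq K L (fun m => (v m - u1 m) + s * w m))
        + 2 * EN K L ε (fun m => (v m + u1 m) / 2 + s * (((1 / 2 : ℝ) : ℂ) * w m)) := by
    ext s
    rw [GNmp, ← negNormSq_ofReal_mul]
    congr 3 <;> ext m <;> push_cast <;> ring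
  rw [hsplit]
  refine ((((hasDerivAt_negNormSq L _ w).const_mul (a ^ 2)).const_mul _).fun_add
    ((hasDerivAt_EN L ε hφ _).const_mul 2)).congr_deriv ?_
  rw [ipN_add_mul_left, ipN_ofReal_mul_right, Complex.add_re, Complex.re_ofReal_mul,
    Complex.re_ofReal_mul]
  field_simp
  ring

theorem forall_re_ipN_eq_zero_iff {L : ℝ} (hL : L ≠ 0) {G : GridFn K} (hG : RealValued G) :
    (∀ w : GridFn K, RealValued w → ZeroMean w → (ipN K L G w).re = 0) ↔
      ∃ c, G = fun _ => c := by
  refine ⟨fun h => ⟨G 0, funext fun m => ?_⟩, fun ⟨c, hc⟩ w _ hw => by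
    rw [hc, ipN_const_left L c hw, Complex.zero_re]⟩
  let δ : GridFn K := fun m' => (if m' = m then 1 else 0) - (if m' = 0 then 1 else 0)
  have hδ : RealValued δ := fun m' => by simp only [δ]; split_ifs <;> simp
  have hδ0 : ZeroMean δ := by simp [ZeroMean, δ, sum_sub_distrib]
  have hipN : ipN K L G δ = ((L / (2 * K + 1)) ^ 2 : ℝ) * (G m - G 0) := by
    simp [ipN, δ, mul_sub, sum_sub_distrib, apply_ite conj]
  have hre := h δ hδ hδ0
  rw [hipN, Complex.re_ofReal_mul] at hre
  have hh : (L / (2 * K + 1)) ^ 2 ≠ 0 := by positivity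
  refine sub_eq_zero.mp (Complex.ext ?_ ?_)
  · simpa using (mul_eq_zero.mp hre).resolve_left hh
  · simp [hG m, hG 0]

theorem midpoint_eq_iff_specOp_eq_zero {L : ℝ} (hL : L ≠ 0) {M dt a : ℝ} (hM : M ≠ 0)
    (ha : a = 1 / dt) {X μ : GridFn K} (hX : ZeroMean X) :
    (∀ m, X m / (dt : ℂ) = (M : ℂ) * lapN K L μ m) ↔
      specOp K L 1 (fun m => μ m + ((a / M : ℝ) : ℂ) * invNegLapN K L X m) = 0 := by
  rw [specOp_add_mul, invNegLapN, specOp_specOp hL, add_neg_cancel, specOp_exponent_zero,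
    dft_zero, hX, mul_zero, funext_iff]
  refine forall_congr' fun m => ?_
  have hMC : (M : ℂ) ≠ 0 := by exact_mod_cast hM
  simp only [lapN, sub_zero, Pi.zero_apply, ha]
  push_cast
  field_simp
  constructor <;> intro h <;> linear_combination h

end PFC

open PFC in
theorem mp_pfc_iff_critical_point_general
    (K : ℕ) (L : ℝ) (hL : 0 < L) (ε : ℝ) (M : ℝ) (hM : 0 < M)
    (dt : ℝ) (a : ℝ) (ha : a = 1 / dt) (u1 v : GridFn K)
    (hu1 : RealValued u1) (hv : RealValued v)
    (hmass : (∑ s, v s) = ∑ s, u1 s) :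
    (∀ m, (v m - u1 m) / (dt : ℂ)
        = (M : ℂ) * lapN K L (muN K L ε (fun m' => (v m' + u1 m') / 2)) m) ↔
    (∀ w : GridFn K, RealValued w → ZeroMean w →
      HasDerivAt (fun s : ℝ => GNmp K L ε M a u1 (fun m => v m + (s : ℂ) * w m)) 0 0) := by
  set φ : GridFn K := fun m => (v m + u1 m) / 2
  set X : GridFn K := fun m => v m - u1 m
  set G : GridFn K := fun m => muN K L ε φ m + ((a / M : ℝ) : ℂ) * invNegLapN K L X m
  have hφ : RealValued φ := fun m => by simp [φ, hv m, hu1 m]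
  have hX : RealValued X := fun m => by simp [X, hv m, hu1 m]
  have hX0 : ZeroMean X := by simp [ZeroMean, X, sum_sub_distrib, hmass]
  have hG : RealValued G := fun m => by
    simp [G, realValued_muN L ε hφ m, realValued_specOp L (-1) hX m, invNegLapN]
  calc _ ↔ specOp K L 1 G = 0 := midpoint_eq_iff_specOp_eq_zero hL.ne' hM.ne' ha hX0
    _ ↔ ∃ c, G = fun _ => c := specOp_eq_zero_iff hL.ne' 1 G
    _ ↔ ∀ w : GridFn K, RealValued w → ZeroMean w → (ipN K L G w).re = 0 :=
      (forall_re_ipN_eq_zero_iff hL.ne' hG).symm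
    _ ↔ _ := forall_congr' fun w => forall_congr' fun _ => forall_congr' fun _ =>
      ⟨fun h => h ▸ hasDerivAt_GNmp L ε M a hφ w, (hasDerivAt_GNmp L ε M a hφ w).unique⟩

/-- `v` solves the fully discrete midpoint-rule PFC equation
`(v − u¹)/dt = M Δ_N(μ_N((v + u¹)/2))` if and only if `v` is a critical point of the
midpoint objective `G_N` along mass-conserving (zero-mean) directions. -/
theorem mp_pfc_iff_critical_point
    (K : ℕ) (hK : 1 ≤ K) (L : ℝ) (hL : 0 < L) (ε : ℝ) (M : ℝ) (hM : 0 < M)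
    (dt : ℝ) (hdt : 0 < dt) (a : ℝ) (ha : a = 1 / dt) (u1 v : GridFn K)
    (hu1 : RealValued u1) (hv : RealValued v)
    (hmass : (∑ s, v s) = ∑ s, u1 s) :
    (∀ m, (v m - u1 m) / (dt : ℂ)
        = (M : ℂ) * lapN K L (muN K L ε (fun m' => (v m' + u1 m') / 2)) m) ↔
    (∀ w : GridFn K, RealValued w → ZeroMean w →
      HasDerivAt (fun s : ℝ => GNmp K L ε M a u1 (fun m => v m + (s : ℂ) * w m)) 0 0) :=
  mp_pfc_iff_critical_point_general K L hL ε M hM dt a ha u1 v hu1 hv hmass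
end
end
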